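/- arXiv:2406.00920 — 3 statements merged into one kernel-verified Lean document; each statement's English description precedes it below -/
import Mathlib

section
/- Let x_1, …, x_b be square-integrable random vectors in ℝ^d defined on a common probability space together with a random variable B, and suppose there is ρ ∈ [0, 1] such that for all i ≠ j, tr Cov(x_i, x_j | B) ≤ ρ √(tr 𝕍[x_i | B]) √(tr 𝕍[x_j | B]) almost surely. Define S = Σ_{i=1}^b √(tr 𝕍[x_i | B]) and V = Σ_{i=1}^b tr 𝕍[x_i | B]. Then E[tr 𝕍[Σ_{i=1}^b x_i | B]] ≤ ρ 𝕍[S] + ρ (E[S])² + (1 − ρ) E[V], with equality when the conditional covariance inequality holds with equality. -/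
open MeasureTheory ProbabilityTheory
open scoped ENNReal

/-- `tr 𝕍[v] = E‖v − E v‖₂²` for a random vector `v`. -/
noncomputable def trVar {Ω : Type*} [MeasurableSpace Ω] (μ : Measure Ω)
    {E : Type*} [NormedAddCommGroup E] [NormedSpace ℝ E] [CompleteSpace E]
    (v : Ω → E) : ℝ :=
  ∫ ω, ‖v ω - ∫ ω', v ω' ∂μ‖ ^ 2 ∂μ

/-- `tr Cov(u, v) = E⟨u − E u, v − E v⟩` for random vectors `u, v`. -/
noncomputable def trCov {Ω : Type*} [MeasurableSpace Ω] (μ : Measure Ω)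
    {E : Type*} [NormedAddCommGroup E] [InnerProductSpace ℝ E] [CompleteSpace E]
    (u v : Ω → E) : ℝ :=
  ∫ ω, @inner ℝ _ _ (u ω - ∫ ω', u ω' ∂μ) (v ω - ∫ ω', v ω' ∂μ) ∂μ

/-- Bregman divergence `D_φ(x, y) = φ(x) − φ(y) − ⟨∇φ(y), x − y⟩`. -/
noncomputable def breg {E : Type*} [NormedAddCommGroup E] [InnerProductSpace ℝ E]
    [CompleteSpace E] (φ : E → ℝ) (x y : E) : ℝ :=
  φ x - φ y - @inner ℝ _ _ (gradient φ y) (x - y)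

/-- Conditional trace variance `tr 𝕍[v | m] = E[‖v − E[v|m]‖² | m]`. -/
noncomputable def condTrVar {Ω : Type*} [MeasurableSpace Ω] (μ : Measure Ω)
    (m : MeasurableSpace Ω)
    {E : Type*} [NormedAddCommGroup E] [InnerProductSpace ℝ E] [CompleteSpace E]
    (v : Ω → E) : Ω → ℝ :=
  μ[fun ω => ‖v ω - (μ[v | m]) ω‖ ^ 2 | m]

/-- Conditional trace covariance `tr Cov(u, v | m) = E[⟨u − E[u|m], v − E[v|m]⟩ | m]`. -/
noncomputable def condTrCov {Ω : Type*} [MeasurableSpace Ω] (μ : Measure Ω)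
    (m : MeasurableSpace Ω)
    {E : Type*} [NormedAddCommGroup E] [InnerProductSpace ℝ E] [CompleteSpace E]
    (u v : Ω → E) : Ω → ℝ :=
  μ[fun ω => @inner ℝ _ _ (u ω - (μ[u | m]) ω) (v ω - (μ[v | m]) ω) | m]


/-! Expanding the square, `‖Σᵢ (xᵢ - E[xᵢ|B])‖² = Σᵢⱼ ⟨xᵢ - E[xᵢ|B], xⱼ - E[xⱼ|B]⟩`, so
`tr 𝕍[Σᵢ xᵢ | B] = Σᵢⱼ tr Cov(xᵢ, xⱼ | B)` almost surely. With `vᵢ = tr 𝕍[xᵢ | B]`, bounding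
the off-diagonal terms by `ρ √vᵢ √vⱼ` and splitting the diagonal ones as
`vᵢ = ρ vᵢ + (1 - ρ) vᵢ` gives the pointwise bound `tr 𝕍[Σᵢ xᵢ | B] ≤ ρ S² + (1 - ρ) V`;
take expectations and use `E[S²] = 𝕍[S] + (E S)²`. -/

namespace MeasureTheory

variable {Ω E : Type*} [MeasurableSpace Ω] {μ : Measure Ω}

theorem MemLp.integrable_inner [NormedAddCommGroup E] [InnerProductSpace ℝ E] {f g : Ω → E}
    (hf : MemLp f 2 μ) (hg : MemLp g 2 μ) :
    Integrable (fun ω => inner ℝ (f ω) (g ω)) μ :=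
  (L2.integrable_inner (𝕜 := ℝ) (hf.toLp f) (hg.toLp g)).congr <| by
    filter_upwards [hf.coeFn_toLp, hg.coeFn_toLp] with ω hfω hgω
    rw [hfω, hgω]

theorem Integrable.memLp_two_sqrt {f : Ω → ℝ} (hf : Integrable f μ) (hf₀ : 0 ≤ᵐ[μ] f) :
    MemLp (fun ω => √(f ω)) 2 μ :=
  (memLp_two_iff_integrable_sq (by fun_prop)).2 <|
    hf.congr <| hf₀.mono fun ω hω => (Real.sq_sqrt hω).symm

end MeasureTheory

theorem Finset.sum_sum_eq_mul_sq_add_sum_sq {ι : Type*} [Fintype ι] [DecidableEq ι]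
    (a : ι → ℝ) (ρ : ℝ) :
    ∑ i, ∑ j, (ρ * a i * a j + if i = j then (1 - ρ) * a i ^ 2 else 0)
      = ρ * (∑ i, a i) ^ 2 + (1 - ρ) * ∑ i, a i ^ 2 := by
  simp only [Finset.sum_add_distrib, Finset.sum_ite_eq, Finset.mem_univ, if_true,
    ← Finset.mul_sum, mul_assoc, sq, Finset.sum_mul_sum]

theorem Finset.sum_sum_le_of_offDiag_le {ι : Type*} [Fintype ι] (c : ι → ι → ℝ)
    (a : ι → ℝ) (ρ : ℝ) (hdiag : ∀ i, c i i = a i ^ 2)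
    (hoff : ∀ i j, i ≠ j → c i j ≤ ρ * a i * a j) :
    ∑ i, ∑ j, c i j ≤ ρ * (∑ i, a i) ^ 2 + (1 - ρ) * ∑ i, a i ^ 2 := by
  classical
  rw [← Finset.sum_sum_eq_mul_sq_add_sum_sq]
  refine Finset.sum_le_sum fun i _ => Finset.sum_le_sum fun j _ => ?_
  split_ifs with hij
  · subst hij; exact le_of_eq (by rw [hdiag]; ring)
  · simpa using hoff i j hij

theorem Finset.sum_sum_eq_of_offDiag_eq {ι : Type*} [Fintype ι] (c : ι → ι → ℝ)
    (a : ι → ℝ) (ρ : ℝ) (hdiag : ∀ i, c i i = a i ^ 2)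
    (hoff : ∀ i j, i ≠ j → c i j = ρ * a i * a j) :
    ∑ i, ∑ j, c i j = ρ * (∑ i, a i) ^ 2 + (1 - ρ) * ∑ i, a i ^ 2 := by
  classical
  rw [← Finset.sum_sum_eq_mul_sq_add_sum_sq]
  refine Finset.sum_congr rfl fun i _ => Finset.sum_congr rfl fun j _ => ?_
  split_ifs with hij
  · subst hij; rw [hdiag]; ring
  · simpa using hoff i j hij

section

variable {Ω E : Type*} {m m0 : MeasurableSpace Ω} {μ : Measure Ω}
  [NormedAddCommGroup E] [InnerProductSpace ℝ E] [CompleteSpace E]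

theorem condTrCov_self (u : Ω → E) : condTrCov μ m u u = condTrVar μ m u := by
  simp only [condTrCov, condTrVar, real_inner_self_eq_norm_sq]

theorem integrable_condTrVar (u : Ω → E) : Integrable (condTrVar μ m u) μ :=
  integrable_condExp

theorem condTrVar_nonneg (u : Ω → E) : 0 ≤ᵐ[μ] condTrVar μ m u :=
  condExp_nonneg <| .of_forall fun _ => by positivity

theorem condTrVar_sum_ae_eq [IsFiniteMeasure μ] {ι : Type*} (s : Finset ι) {x : ι → Ω → E}
    (hx : ∀ i ∈ s, MemLp (x i) 2 μ) :
    condTrVar μ m (fun ω => ∑ i ∈ s, x i ω)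
      =ᵐ[μ] fun ω => ∑ i ∈ s, ∑ j ∈ s, condTrCov μ m (x i) (x j) ω := by
  set y : ι → Ω → E := fun i ω => x i ω - μ[x i | m] ω
  have hy : ∀ i ∈ s, MemLp (y i) 2 μ := fun i hi => (hx i hi).sub ((hx i hi).condExp one_le_two)
  have hcond : μ[fun ω => ∑ i ∈ s, x i ω | m] =ᵐ[μ] fun ω => ∑ i ∈ s, μ[x i | m] ω := by
    rw [← Finset.sum_fn]
    filter_upwards [condExp_finsetSum (fun i hi => (hx i hi).integrable one_le_two) m]
      with ω hω
    simp [hω]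
  have hexpand : (fun ω => ‖∑ i ∈ s, x i ω - μ[fun ω => ∑ i ∈ s, x i ω | m] ω‖ ^ 2)
      =ᵐ[μ] ∑ p ∈ s ×ˢ s, fun ω => inner ℝ (y p.1 ω) (y p.2 ω) := by
    filter_upwards [hcond] with ω hω
    rw [hω, ← Finset.sum_sub_distrib, ← real_inner_self_eq_norm_sq, sum_inner,
      Finset.sum_apply, Finset.sum_product]
    simp only [inner_sum, y]
  refine (condExp_congr_ae hexpand).trans ?_
  have hinner : ∀ p ∈ s ×ˢ s, Integrable (fun ω => inner ℝ (y p.1 ω) (y p.2 ω)) μ :=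
    fun p hp => (hy p.1 (Finset.mem_product.1 hp).1).integrable_inner
      (hy p.2 (Finset.mem_product.1 hp).2)
  filter_upwards [condExp_finsetSum hinner m] with ω hω
  rw [hω, Finset.sum_apply, Finset.sum_product]
  rfl

theorem ae_condTrVar_sum_le [IsFiniteMeasure μ] {ι : Type*} [Fintype ι] {x : ι → Ω → E}
    (hx : ∀ i, MemLp (x i) 2 μ) (ρ : ℝ)
    (hcov : ∀ i j, i ≠ j → ∀ᵐ ω ∂μ, condTrCov μ m (x i) (x j) ω
      ≤ ρ * √(condTrVar μ m (x i) ω) * √(condTrVar μ m (x j) ω)) :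
    ∀ᵐ ω ∂μ, condTrVar μ m (fun ω' => ∑ i, x i ω') ω
      ≤ ρ * (∑ i, √(condTrVar μ m (x i) ω)) ^ 2 + (1 - ρ) * ∑ i, condTrVar μ m (x i) ω := by
  filter_upwards [condTrVar_sum_ae_eq Finset.univ fun i _ => hx i,
    ae_all_iff.2 fun i => condTrVar_nonneg (μ := μ) (m := m) (x i),
    ae_all_iff.2 fun i => ae_all_iff.2 fun j => Filter.eventually_imp_distrib_left.2 (hcov i j)]
    with ω hsum hnonneg hoff
  rw [hsum, ← Finset.sum_congr rfl fun i _ => Real.sq_sqrt (hnonneg i)]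
  exact Finset.sum_sum_le_of_offDiag_le _ _ ρ
    (fun i => by rw [condTrCov_self, Real.sq_sqrt (hnonneg i)]) hoff

theorem ae_condTrVar_sum_eq [IsFiniteMeasure μ] {ι : Type*} [Fintype ι] {x : ι → Ω → E}
    (hx : ∀ i, MemLp (x i) 2 μ) (ρ : ℝ)
    (hcov : ∀ i j, i ≠ j → ∀ᵐ ω ∂μ, condTrCov μ m (x i) (x j) ω
      = ρ * √(condTrVar μ m (x i) ω) * √(condTrVar μ m (x j) ω)) :
    ∀ᵐ ω ∂μ, condTrVar μ m (fun ω' => ∑ i, x i ω') ω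
      = ρ * (∑ i, √(condTrVar μ m (x i) ω)) ^ 2 + (1 - ρ) * ∑ i, condTrVar μ m (x i) ω := by
  filter_upwards [condTrVar_sum_ae_eq Finset.univ fun i _ => hx i,
    ae_all_iff.2 fun i => condTrVar_nonneg (μ := μ) (m := m) (x i),
    ae_all_iff.2 fun i => ae_all_iff.2 fun j => Filter.eventually_imp_distrib_left.2 (hcov i j)]
    with ω hsum hnonneg hoff
  rw [hsum, ← Finset.sum_congr rfl fun i _ => Real.sq_sqrt (hnonneg i)]
  exact Finset.sum_sum_eq_of_offDiag_eq _ _ ρ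
    (fun i => by rw [condTrCov_self, Real.sq_sqrt (hnonneg i)]) hoff

theorem integrable_sq_sum_sqrt_condTrVar [IsFiniteMeasure μ] {ι : Type*} (s : Finset ι)
    (x : ι → Ω → E) : Integrable (fun ω => (∑ i ∈ s, √(condTrVar μ m (x i) ω)) ^ 2) μ :=
  (memLp_finsetSum s fun i _ =>
    (integrable_condTrVar (x i)).memLp_two_sqrt (condTrVar_nonneg (x i))).integrable_sq

theorem integrable_condTrVar_bound [IsFiniteMeasure μ] {ι : Type*} [Fintype ι]
    (x : ι → Ω → E) (ρ : ℝ) :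
    Integrable (fun ω => ρ * (∑ i, √(condTrVar μ m (x i) ω)) ^ 2
      + (1 - ρ) * ∑ i, condTrVar μ m (x i) ω) μ :=
  ((integrable_sq_sum_sqrt_condTrVar _ x).const_mul ρ).add
    ((integrable_finsetSum _ fun i _ => integrable_condTrVar (x i)).const_mul _)

theorem integral_condTrVar_bound [IsFiniteMeasure μ] {ι : Type*} [Fintype ι]
    (x : ι → Ω → E) (ρ : ℝ) :
    ∫ ω, (ρ * (∑ i, √(condTrVar μ m (x i) ω)) ^ 2 + (1 - ρ) * ∑ i, condTrVar μ m (x i) ω) ∂μ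
      = ρ * ∫ ω, (∑ i, √(condTrVar μ m (x i) ω)) ^ 2 ∂μ
        + (1 - ρ) * ∫ ω, ∑ i, condTrVar μ m (x i) ω ∂μ := by
  rw [integral_add ((integrable_sq_sum_sqrt_condTrVar _ x).const_mul ρ)
      ((integrable_finsetSum _ fun i _ => integrable_condTrVar (x i)).const_mul _),
    integral_const_mul, integral_const_mul]

theorem integral_condTrVar_sum_le [IsFiniteMeasure μ] {ι : Type*} [Fintype ι]
    {x : ι → Ω → E} (hx : ∀ i, MemLp (x i) 2 μ) (ρ : ℝ)
    (hcov : ∀ i j, i ≠ j → ∀ᵐ ω ∂μ, condTrCov μ m (x i) (x j) ω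
      ≤ ρ * √(condTrVar μ m (x i) ω) * √(condTrVar μ m (x j) ω)) :
    ∫ ω, condTrVar μ m (fun ω' => ∑ i, x i ω') ω ∂μ
      ≤ ρ * ∫ ω, (∑ i, √(condTrVar μ m (x i) ω)) ^ 2 ∂μ
        + (1 - ρ) * ∫ ω, ∑ i, condTrVar μ m (x i) ω ∂μ :=
  (integral_mono_ae integrable_condExp (integrable_condTrVar_bound x ρ)
    (ae_condTrVar_sum_le hx ρ hcov)).trans_eq (integral_condTrVar_bound x ρ)

theorem integral_condTrVar_sum_eq [IsFiniteMeasure μ] {ι : Type*} [Fintype ι]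
    {x : ι → Ω → E} (hx : ∀ i, MemLp (x i) 2 μ) (ρ : ℝ)
    (hcov : ∀ i j, i ≠ j → ∀ᵐ ω ∂μ, condTrCov μ m (x i) (x j) ω
      = ρ * √(condTrVar μ m (x i) ω) * √(condTrVar μ m (x j) ω)) :
    ∫ ω, condTrVar μ m (fun ω' => ∑ i, x i ω') ω ∂μ
      = ρ * ∫ ω, (∑ i, √(condTrVar μ m (x i) ω)) ^ 2 ∂μ
        + (1 - ρ) * ∫ ω, ∑ i, condTrVar μ m (x i) ω ∂μ :=
  (integral_congr_ae (ae_condTrVar_sum_eq hx ρ hcov)).trans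
    (integral_condTrVar_bound x ρ)

end

theorem expected_conditional_variance_of_sum_general
    {d b : ℕ} {Ω β : Type*} [MeasurableSpace Ω] [MeasurableSpace β]
    (μ : Measure Ω) [IsProbabilityMeasure μ]
    (B : Ω → β)
    (x : Fin b → Ω → EuclideanSpace ℝ (Fin d))
    (hmem : ∀ i, MemLp (x i) 2 μ)
    (ρ : ℝ)
    (hcov : ∀ i j, i ≠ j →
      ∀ᵐ ω ∂μ,
        condTrCov μ (MeasurableSpace.comap B inferInstance) (x i) (x j) ω
          ≤ ρ * Real.sqrt (condTrVar μ (MeasurableSpace.comap B inferInstance) (x i) ω)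
              * Real.sqrt (condTrVar μ (MeasurableSpace.comap B inferInstance) (x j) ω)) :
    (∫ ω, condTrVar μ (MeasurableSpace.comap B inferInstance)
          (fun ω' => ∑ i, x i ω') ω ∂μ
        ≤ ρ * ((∫ ω, (∑ i, Real.sqrt
                (condTrVar μ (MeasurableSpace.comap B inferInstance) (x i) ω)) ^ 2 ∂μ)
              - (∫ ω, ∑ i, Real.sqrt
                  (condTrVar μ (MeasurableSpace.comap B inferInstance) (x i) ω) ∂μ) ^ 2)
          + ρ * (∫ ω, ∑ i, Real.sqrt
                  (condTrVar μ (MeasurableSpace.comap B inferInstance) (x i) ω) ∂μ) ^ 2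
          + (1 - ρ) * ∫ ω, ∑ i,
              condTrVar μ (MeasurableSpace.comap B inferInstance) (x i) ω ∂μ) ∧
    ((∀ i j, i ≠ j →
        ∀ᵐ ω ∂μ,
          condTrCov μ (MeasurableSpace.comap B inferInstance) (x i) (x j) ω
            = ρ * Real.sqrt (condTrVar μ (MeasurableSpace.comap B inferInstance) (x i) ω)
                * Real.sqrt (condTrVar μ (MeasurableSpace.comap B inferInstance) (x j) ω)) →
      ∫ ω, condTrVar μ (MeasurableSpace.comap B inferInstance)
          (fun ω' => ∑ i, x i ω') ω ∂μ
        = ρ * ((∫ ω, (∑ i, Real.sqrt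
                (condTrVar μ (MeasurableSpace.comap B inferInstance) (x i) ω)) ^ 2 ∂μ)
              - (∫ ω, ∑ i, Real.sqrt
                  (condTrVar μ (MeasurableSpace.comap B inferInstance) (x i) ω) ∂μ) ^ 2)
          + ρ * (∫ ω, ∑ i, Real.sqrt
                  (condTrVar μ (MeasurableSpace.comap B inferInstance) (x i) ω) ∂μ) ^ 2
          + (1 - ρ) * ∫ ω, ∑ i,
              condTrVar μ (MeasurableSpace.comap B inferInstance) (x i) ω ∂μ) := by
  constructor
  · exact (integral_condTrVar_sum_le hmem ρ hcov).trans_eq (by ring)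
  · exact fun hcov_eq => (integral_condTrVar_sum_eq hmem ρ hcov_eq).trans (by ring)

/-- Expected conditional variance of a sum of correlated random vectors:
`E[tr 𝕍[Σᵢ xᵢ | B]] ≤ ρ 𝕍[S] + ρ (E S)² + (1 − ρ) E V`, where
`S = Σᵢ √(tr 𝕍[xᵢ | B])` and `V = Σᵢ tr 𝕍[xᵢ | B]`, with equality when the conditional
covariance inequality holds with equality. -/
theorem expected_conditional_variance_of_sum
    {d b : ℕ} {Ω β : Type*} [MeasurableSpace Ω] [MeasurableSpace β]
    (μ : Measure Ω) [IsProbabilityMeasure μ]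
    (B : Ω → β) (hBmeas : Measurable B)
    (x : Fin b → Ω → EuclideanSpace ℝ (Fin d))
    (hmem : ∀ i, MemLp (x i) 2 μ)
    (ρ : ℝ) (hρ : ρ ∈ Set.Icc (0 : ℝ) 1)
    (hcov : ∀ i j, i ≠ j →
      ∀ᵐ ω ∂μ,
        condTrCov μ (MeasurableSpace.comap B inferInstance) (x i) (x j) ω
          ≤ ρ * Real.sqrt (condTrVar μ (MeasurableSpace.comap B inferInstance) (x i) ω)
              * Real.sqrt (condTrVar μ (MeasurableSpace.comap B inferInstance) (x j) ω)) :
    (∫ ω, condTrVar μ (MeasurableSpace.comap B inferInstance)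
          (fun ω' => ∑ i, x i ω') ω ∂μ
        ≤ ρ * ((∫ ω, (∑ i, Real.sqrt
                (condTrVar μ (MeasurableSpace.comap B inferInstance) (x i) ω)) ^ 2 ∂μ)
              - (∫ ω, ∑ i, Real.sqrt
                  (condTrVar μ (MeasurableSpace.comap B inferInstance) (x i) ω) ∂μ) ^ 2)
          + ρ * (∫ ω, ∑ i, Real.sqrt
                  (condTrVar μ (MeasurableSpace.comap B inferInstance) (x i) ω) ∂μ) ^ 2
          + (1 - ρ) * ∫ ω, ∑ i,
              condTrVar μ (MeasurableSpace.comap B inferInstance) (x i) ω ∂μ) ∧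
    ((∀ i j, i ≠ j →
        ∀ᵐ ω ∂μ,
          condTrCov μ (MeasurableSpace.comap B inferInstance) (x i) (x j) ω
            = ρ * Real.sqrt (condTrVar μ (MeasurableSpace.comap B inferInstance) (x i) ω)
                * Real.sqrt (condTrVar μ (MeasurableSpace.comap B inferInstance) (x j) ω)) →
      ∫ ω, condTrVar μ (MeasurableSpace.comap B inferInstance)
          (fun ω' => ∑ i, x i ω') ω ∂μ
        = ρ * ((∫ ω, (∑ i, Real.sqrt
                (condTrVar μ (MeasurableSpace.comap B inferInstance) (x i) ω)) ^ 2 ∂μ)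
              - (∫ ω, ∑ i, Real.sqrt
                  (condTrVar μ (MeasurableSpace.comap B inferInstance) (x i) ω) ∂μ) ^ 2)
          + ρ * (∫ ω, ∑ i, Real.sqrt
                  (condTrVar μ (MeasurableSpace.comap B inferInstance) (x i) ω) ∂μ) ^ 2
          + (1 - ρ) * ∫ ω, ∑ i,
              condTrVar μ (MeasurableSpace.comap B inferInstance) (x i) ω ∂μ) :=
  expected_conditional_variance_of_sum_general μ B x hmem ρ hcov
end

section
/- Let F = (1/n)(f_1 + … + f_n) on X ⊆ ℝ^d, where each f_i is convex, differentiable, and L_i-smooth in the sense ‖∇f_i(x) − ∇f_i(y)‖₂² ≤ 2L_i D_{f_i}(x, y) for all x, y ∈ X, and suppose every minimizer x* of F over X is a stationary point of F. Let B be a uniformly random size-b subset of {1,…,n} drawn without replacement (1 ≤ b ≤ n, n ≥ 2), and ∇f_B(x) = (1/b)Σ_{i∈B}∇f_i(x). Then tr 𝕍[∇f_B(x) − ∇f_B(x*)] ≤ 2·((n−b)/(b(n−1)))·L_max·(F(x) − F(x*)) for all x ∈ X, where L_max = max{L_1,…,L_n}. -/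
open MeasureTheory ProbabilityTheory
open scoped ENNReal

/-! With `gᵢ = ∇fᵢ(x) − ∇fᵢ(x*)` and `ḡ` their mean, the variance of the mean of a uniformly
random `b`-subset is the finite-population formula `(n − b)/(b n (n − 1)) Σ ‖gᵢ − ḡ‖²`: expanding
`‖Σ_{i∈B} (gᵢ − ḡ)‖²` and counting the `b`-subsets through one or two given indices, the
off-diagonal terms only contribute a multiple of `‖Σ (gᵢ − ḡ)‖² = 0`. Then
`Σ ‖gᵢ − ḡ‖² ≤ Σ ‖gᵢ‖² ≤ 2 L_max Σ D_{fᵢ}(x, x*)`, and `Σ ∇fᵢ(x*) = 0` turns the Bregman sum into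
`n (F(x) − F(x*))`. -/

open Finset
open scoped RealInnerProductSpace

lemma Nat.mul_choose_sub_one {n k : ℕ} (hn : 1 ≤ n) (hk : 1 ≤ k) :
    n * (n - 1).choose (k - 1) = n.choose k * k := by
  obtain ⟨n, rfl⟩ := Nat.exists_eq_add_of_le' hn
  obtain ⟨k, rfl⟩ := Nat.exists_eq_add_of_le' hk
  exact Nat.add_one_mul_choose_eq n k

section Subsampling

variable {ι : Type*} [Fintype ι]

lemma sum_norm_sub_mean_sq_le {E : Type*} [NormedAddCommGroup E] [InnerProductSpace ℝ E]
    (g : ι → E) :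
    ∑ i, ‖g i - (Fintype.card ι : ℝ)⁻¹ • ∑ j, g j‖ ^ 2 ≤ ∑ i, ‖g i‖ ^ 2 := by
  set m := (Fintype.card ι : ℝ)⁻¹ • ∑ j, g j
  have hsum : ∑ i, g i = (Fintype.card ι : ℝ) • m := by
    cases isEmpty_or_nonempty ι
    · simp
    · rw [smul_smul, mul_inv_cancel₀ (by positivity), one_smul]
  have hexpand : ∑ i, ‖g i - m‖ ^ 2 = ∑ i, ‖g i‖ ^ 2 - Fintype.card ι * ‖m‖ ^ 2 := by
    simp_rw [norm_sub_sq_real, sum_add_distrib, sum_sub_distrib, ← mul_sum, ← sum_inner, hsum,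
      real_inner_smul_left, real_inner_self_eq_norm_sq, sum_const, card_univ, nsmul_eq_mul]
    ring
  rw [hexpand]
  exact sub_le_self _ (by positivity)

variable [DecidableEq ι]

lemma sum_sum_mem_eq_sum_card_smul {M : Type*} [AddCommMonoid M] (P : Finset (Finset ι))
    (g : ι → M) : ∑ s ∈ P, ∑ i ∈ s, g i = ∑ i, #{s ∈ P | i ∈ s} • g i := by
  simp_rw [← sum_const, sum_filter]
  rw [sum_comm]
  refine sum_congr rfl fun s _ => ?_
  rw [← sum_filter, filter_mem_eq_inter, univ_inter]

lemma card_filter_mem_powersetCard (i : ι) {b : ℕ} (hb : 1 ≤ b) :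
    #{s ∈ powersetCard b univ | i ∈ s} = (Fintype.card ι - 1).choose (b - 1) := by
  simpa using card_filter_powersetCard_subset {i} univ b (subset_univ _) (by simpa using hb)

/-- Stated with the factor `n - 1` because the count itself is `C(n - 2, b - 2)` only for `b ≥ 2`:
for `b = 1` it is `0`, while truncated subtraction gives `C(n - 2, 0) = 1`. -/
lemma card_filter_pair_mem_powersetCard_mul {i j : ι} (hij : i ≠ j) {b : ℕ} (hb : 1 ≤ b) :
    (Fintype.card ι - 1) * #{s ∈ powersetCard b univ | i ∈ s ∧ j ∈ s}
      = (b - 1) * (Fintype.card ι - 1).choose (b - 1) := by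
  have hpair : #({i, j} : Finset ι) = 2 := card_pair hij
  obtain rfl | hb2 := hb.eq_or_lt
  · have hempty : {s ∈ powersetCard 1 (univ : Finset ι) | i ∈ s ∧ j ∈ s} = ∅ := by
      refine filter_eq_empty_iff.2 fun s hs ⟨hi, hj⟩ => ?_
      have := card_le_card (insert_subset hi (singleton_subset_iff.2 hj))
      rw [hpair, (mem_powersetCard.1 hs).2] at this
      omega
    simp [hempty]
  · have hfilter : {s ∈ powersetCard b (univ : Finset ι) | i ∈ s ∧ j ∈ s}
        = {s ∈ powersetCard b (univ : Finset ι) | {i, j} ⊆ s} := by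
      simp only [insert_subset_iff, singleton_subset_iff]
    have h2n : 2 ≤ Fintype.card ι := hpair ▸ card_le_univ ({i, j} : Finset ι)
    rw [hfilter, card_filter_powersetCard_subset _ _ _ (subset_univ _) (hpair ▸ hb2), hpair,
      card_univ]
    have := Nat.mul_choose_sub_one (n := Fintype.card ι - 1) (k := b - 1) (by omega) (by omega)
    rw [show Fintype.card ι - 1 - 1 = Fintype.card ι - 2 by omega,
      show b - 1 - 1 = b - 2 by omega] at this
    linarith

lemma sum_powersetCard_mean_eq {M : Type*} [AddCommGroup M] [Module ℝ M] {b : ℕ} (hb1 : 1 ≤ b)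
    (hbn : b ≤ Fintype.card ι) (g : ι → M) :
    ((Fintype.card ι).choose b : ℝ)⁻¹ • ∑ s ∈ powersetCard b univ, (b : ℝ)⁻¹ • ∑ i ∈ s, g i
      = (Fintype.card ι : ℝ)⁻¹ • ∑ i, g i := by
  have hA : (Fintype.card ι : ℝ) * (Fintype.card ι - 1).choose (b - 1)
      = (Fintype.card ι).choose b * b := by
    exact_mod_cast Nat.mul_choose_sub_one (hb1.trans hbn) hb1
  have hC : ((Fintype.card ι).choose b : ℝ) ≠ 0 := by
    exact_mod_cast (Nat.choose_pos hbn).ne'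
  have hn : (Fintype.card ι : ℝ) ≠ 0 := by
    exact_mod_cast (Nat.one_le_iff_ne_zero.1 (hb1.trans hbn))
  have hb : (b : ℝ) ≠ 0 := by positivity
  simp_rw [← smul_sum, sum_sum_mem_eq_sum_card_smul, card_filter_mem_powersetCard _ hb1,
    ← smul_sum, ← Nat.cast_smul_eq_nsmul ℝ, smul_smul]
  congr 1
  field_simp
  linear_combination hA

variable {E : Type*} [NormedAddCommGroup E] [InnerProductSpace ℝ E]

lemma sum_norm_sum_sq_eq_sum_card_mul_inner (P : Finset (Finset ι)) (h : ι → E) :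
    ∑ s ∈ P, ‖∑ i ∈ s, h i‖ ^ 2 = ∑ i, ∑ j, (#{s ∈ P | i ∈ s ∧ j ∈ s} : ℝ) * ⟪h i, h j⟫ := by
  have hs (s : Finset ι) : ‖∑ i ∈ s, h i‖ ^ 2
      = ∑ i, ∑ j, if i ∈ s ∧ j ∈ s then ⟪h i, h j⟫ else 0 := by
    rw [← real_inner_self_eq_norm_sq, sum_inner]
    simp_rw [inner_sum, ite_and, sum_ite_irrel, ← sum_filter, filter_mem_eq_inter, univ_inter]
    simp
  simp_rw [hs, ← nsmul_eq_mul, ← sum_const, sum_filter]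
  rw [sum_comm]
  refine sum_congr rfl fun i _ => ?_
  rw [sum_comm]

lemma sub_one_mul_sum_powersetCard_norm_sum_sq {b : ℕ} (hb : 1 ≤ b) (h : ι → E) :
    ((Fintype.card ι : ℝ) - 1) * ∑ s ∈ powersetCard b univ, ‖∑ i ∈ s, h i‖ ^ 2
      = ((Fintype.card ι - 1).choose (b - 1) : ℝ)
          * ((Fintype.card ι - b) * ∑ i, ‖h i‖ ^ 2 + (b - 1) * ‖∑ i, h i‖ ^ 2) := by
  set n := Fintype.card ι
  have hcoef (i j : ι) : ((n : ℝ) - 1) * #{s ∈ powersetCard b univ | i ∈ s ∧ j ∈ s}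
      = (b - 1) * (n - 1).choose (b - 1) + if i = j then (n - b) * ((n - 1).choose (b - 1) : ℝ)
        else 0 := by
    obtain rfl | hij := eq_or_ne i j
    · simp only [and_self, card_filter_mem_powersetCard i hb, if_true]
      ring
    · have h1n : 1 ≤ n := Fintype.card_pos_iff.2 ⟨i⟩
      have := card_filter_pair_mem_powersetCard_mul hij hb
      rw [if_neg hij, add_zero, ← Nat.cast_one, ← Nat.cast_sub h1n, ← Nat.cast_sub hb]
      exact_mod_cast this
  have hnorm : ‖∑ i, h i‖ ^ 2 = ∑ i, ∑ j, ⟪h i, h j⟫ := by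
    rw [← real_inner_self_eq_norm_sq, sum_inner]
    simp_rw [inner_sum]
  rw [sum_norm_sum_sq_eq_sum_card_mul_inner, mul_sum]
  simp_rw [mul_sum, ← mul_assoc, hcoef, add_mul, sum_add_distrib, ite_mul, zero_mul, sum_ite_eq,
    mem_univ, if_true, real_inner_self_eq_norm_sq, ← mul_sum, hnorm]
  ring

lemma sum_powersetCard_norm_mean_sub_mean_sq {b : ℕ} (hn : 2 ≤ Fintype.card ι) (hb1 : 1 ≤ b)
    (hbn : b ≤ Fintype.card ι) (g : ι → E) :
    ((Fintype.card ι).choose b : ℝ)⁻¹ * ∑ s ∈ powersetCard b univ,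
        ‖(b : ℝ)⁻¹ • ∑ i ∈ s, g i - (Fintype.card ι : ℝ)⁻¹ • ∑ i, g i‖ ^ 2
      = (Fintype.card ι - b) / (b * Fintype.card ι * (Fintype.card ι - 1))
          * ∑ i, ‖g i - (Fintype.card ι : ℝ)⁻¹ • ∑ j, g j‖ ^ 2 := by
  set n := Fintype.card ι with hn_def
  set m := (n : ℝ)⁻¹ • ∑ i, g i
  have hn0 : (n : ℝ) ≠ 0 := by positivity
  have hn1 : (n : ℝ) - 1 ≠ 0 := by
    have : (2 : ℝ) ≤ n := by exact_mod_cast hn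
    linarith
  have hb : (b : ℝ) ≠ 0 := by positivity
  have hC : (n.choose b : ℝ) ≠ 0 := by exact_mod_cast (Nat.choose_pos hbn).ne'
  have hA : (n : ℝ) * (n - 1).choose (b - 1) = n.choose b * b := by
    exact_mod_cast Nat.mul_choose_sub_one (hb1.trans hbn) hb1
  have hcentered : ∑ i, (g i - m) = 0 := by
    rw [sum_sub_distrib, sum_const, card_univ, ← Nat.cast_smul_eq_nsmul ℝ, smul_smul,
      mul_inv_cancel₀ hn0, one_smul, sub_self]
  have hmean (s) (hs : s ∈ powersetCard b univ) :
      ‖(b : ℝ)⁻¹ • ∑ i ∈ s, g i - m‖ ^ 2 = (b : ℝ)⁻¹ ^ 2 * ‖∑ i ∈ s, (g i - m)‖ ^ 2 := by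
    rw [sum_sub_distrib, sum_const, (mem_powersetCard.1 hs).2, ← Nat.cast_smul_eq_nsmul ℝ,
      ← sq_abs (b : ℝ)⁻¹, ← Real.norm_eq_abs, ← mul_pow, ← norm_smul, smul_sub, smul_smul,
      inv_mul_cancel₀ hb, one_smul]
  have key := sub_one_mul_sum_powersetCard_norm_sum_sq hb1 (fun i => g i - m)
  rw [← hn_def, hcentered, norm_zero] at key
  rw [sum_congr rfl hmean, ← mul_sum]
  field_simp
  linear_combination (n : ℝ) * key + ((n : ℝ) - b) * (∑ i, ‖g i - m‖ ^ 2) * hA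

end Subsampling

section Bregman

variable {ι F : Type*} [Fintype ι] [NormedAddCommGroup F] [InnerProductSpace ℝ F] [CompleteSpace F]

lemma gradient_const_mul_sum (f : ι → F → ℝ) {x : F} (hf : ∀ i, DifferentiableAt ℝ (f i) x)
    (c : ℝ) : gradient (fun z => c * ∑ i, f i z) x = c • ∑ i, gradient (f i) x := by
  refine HasGradientAt.gradient ?_
  rw [hasGradientAt_iff_hasFDerivAt, map_smul, map_sum]
  exact (HasFDerivAt.fun_sum fun i _ => (hf i).hasGradientAt.hasFDerivAt).const_mul c

lemma sum_breg (f : ι → F → ℝ) (x y : F) :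
    ∑ i, breg (f i) x y = ∑ i, f i x - ∑ i, f i y - ⟪∑ i, gradient (f i) y, x - y⟫ := by
  simp only [breg, sum_sub_distrib, sum_inner]

lemma sum_norm_gradient_sub_sq_le (f : ι → F → ℝ) (L : ι → ℝ) (hL : ∀ i, 0 < L i) {x y : F}
    (hsmooth : ∀ i, ‖gradient (f i) x - gradient (f i) y‖ ^ 2 ≤ 2 * L i * breg (f i) x y) :
    ∑ i, ‖gradient (f i) x - gradient (f i) y‖ ^ 2 ≤ 2 * (⨆ i, L i) * ∑ i, breg (f i) x y := by
  rw [mul_sum]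
  refine sum_le_sum fun i _ => (hsmooth i).trans ?_
  have hD : 0 ≤ breg (f i) x y :=
    nonneg_of_mul_nonneg_right ((sq_nonneg _).trans (hsmooth i)) (by linarith [hL i])
  gcongr
  exact le_ciSup (Set.finite_range L).bddAbove i

end Bregman

/-- The variance over the uniformly random size-`b` subset is written as a normalized sum over
all size-`b` subsets. -/
theorem subsampling_er_without_replacement_general
    {d n : ℕ} (hn : 2 ≤ n) (b : ℕ) (hb1 : 1 ≤ b) (hbn : b ≤ n)
    (X : Set (EuclideanSpace ℝ (Fin d)))
    (f : Fin n → EuclideanSpace ℝ (Fin d) → ℝ)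
    (hdiff : ∀ i, Differentiable ℝ (f i))
    (L : Fin n → ℝ) (hL : ∀ i, 0 < L i)
    (hsmooth : ∀ i, ∀ x ∈ X, ∀ y ∈ X,
      ‖gradient (f i) x - gradient (f i) y‖ ^ 2 ≤ 2 * L i * breg (f i) x y)
    (hstat : ∀ xs ∈ X, (∀ y ∈ X, (n : ℝ)⁻¹ * ∑ i, f i xs ≤ (n : ℝ)⁻¹ * ∑ i, f i y) →
      gradient (fun z => (n : ℝ)⁻¹ * ∑ i, f i z) xs = 0) :
    ∀ x ∈ X, ∀ xs ∈ X,
      (∀ y ∈ X, (n : ℝ)⁻¹ * ∑ i, f i xs ≤ (n : ℝ)⁻¹ * ∑ i, f i y) →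
      (n.choose b : ℝ)⁻¹ *
          ∑ s ∈ Finset.powersetCard b (Finset.univ : Finset (Fin n)),
            ‖(b : ℝ)⁻¹ • ∑ i ∈ s, (gradient (f i) x - gradient (f i) xs)
              - (n.choose b : ℝ)⁻¹ •
                  ∑ s' ∈ Finset.powersetCard b (Finset.univ : Finset (Fin n)),
                    (b : ℝ)⁻¹ • ∑ i ∈ s', (gradient (f i) x - gradient (f i) xs)‖ ^ 2
        ≤ 2 * (((n : ℝ) - b) / (b * ((n : ℝ) - 1))) * (⨆ i, L i)
            * ((n : ℝ)⁻¹ * ∑ i, f i x - (n : ℝ)⁻¹ * ∑ i, f i xs) := by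
  intro x hx xs hxs hmin
  set g := fun i => gradient (f i) x - gradient (f i) xs
  have hstationary : ∑ i, gradient (f i) xs = 0 := by
    have := hstat xs hxs hmin
    rwa [gradient_const_mul_sum f (fun i => (hdiff i).differentiableAt), smul_eq_zero,
      or_iff_right (inv_ne_zero (by positivity))] at this
  have hgap : ∑ i, breg (f i) x xs = ∑ i, f i x - ∑ i, f i xs := by
    rw [sum_breg, hstationary, inner_zero_left, sub_zero]
  have hmean := sum_powersetCard_mean_eq (ι := Fin n) hb1 (by simpa using hbn) g
  have hvar := sum_powersetCard_norm_mean_sub_mean_sq (ι := Fin n) (by simpa using hn) hb1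
    (by simpa using hbn) g
  simp only [Fintype.card_fin] at hmean hvar
  have hc : 0 ≤ ((n : ℝ) - b) / (b * n * (n - 1)) := by
    have : (b : ℝ) ≤ n := by exact_mod_cast hbn
    have : (1 : ℝ) ≤ n := by exact_mod_cast (by omega : 1 ≤ n)
    exact div_nonneg (by linarith) (mul_nonneg (by positivity) (by linarith))
  rw [hmean, hvar]
  calc _ ≤ ((n : ℝ) - b) / (b * n * (n - 1)) * ∑ i, ‖g i‖ ^ 2 :=
        mul_le_mul_of_nonneg_left (by simpa using sum_norm_sub_mean_sq_le g) hc
    _ ≤ ((n : ℝ) - b) / (b * n * (n - 1)) * (2 * (⨆ i, L i) * ∑ i, breg (f i) x xs) :=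
        mul_le_mul_of_nonneg_left
          (sum_norm_gradient_sub_sq_le f L hL fun i => hsmooth i x hx xs hxs) hc
    _ = _ := by
        rw [hgap]
        field_simp

/-- The `b`-minibatch without-replacement subsampling estimator `∇f_B` of the
finite-sum objective `F = (1/n)Σfᵢ` with convex `Lᵢ`-smooth components satisfies the expected
residual condition with constant `((n−b)/(b(n−1))) L_max`, provided every minimizer of `F` over
`X` is a stationary point.  The variance over the uniformly random size-`b` subset is written
as a normalized sum over all size-`b` subsets. -/
theorem subsampling_er_without_replacement
    {d n : ℕ} (hn : 2 ≤ n) (b : ℕ) (hb1 : 1 ≤ b) (hbn : b ≤ n)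
    (X : Set (EuclideanSpace ℝ (Fin d)))
    (f : Fin n → EuclideanSpace ℝ (Fin d) → ℝ)
    (hconv : ∀ i, ConvexOn ℝ X (f i)) (hdiff : ∀ i, Differentiable ℝ (f i))
    (L : Fin n → ℝ) (hL : ∀ i, 0 < L i)
    (hsmooth : ∀ i, ∀ x ∈ X, ∀ y ∈ X,
      ‖gradient (f i) x - gradient (f i) y‖ ^ 2 ≤ 2 * L i * breg (f i) x y)
    (hstat : ∀ xs ∈ X, (∀ y ∈ X, (n : ℝ)⁻¹ * ∑ i, f i xs ≤ (n : ℝ)⁻¹ * ∑ i, f i y) →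
      gradient (fun z => (n : ℝ)⁻¹ * ∑ i, f i z) xs = 0) :
    ∀ x ∈ X, ∀ xs ∈ X,
      (∀ y ∈ X, (n : ℝ)⁻¹ * ∑ i, f i xs ≤ (n : ℝ)⁻¹ * ∑ i, f i y) →
      (n.choose b : ℝ)⁻¹ *
          ∑ s ∈ Finset.powersetCard b (Finset.univ : Finset (Fin n)),
            ‖(b : ℝ)⁻¹ • ∑ i ∈ s, (gradient (f i) x - gradient (f i) xs)
              - (n.choose b : ℝ)⁻¹ •
                  ∑ s' ∈ Finset.powersetCard b (Finset.univ : Finset (Fin n)),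
                    (b : ℝ)⁻¹ • ∑ i ∈ s', (gradient (f i) x - gradient (f i) xs)‖ ^ 2
        ≤ 2 * (((n : ℝ) - b) / (b * ((n : ℝ) - 1))) * (⨆ i, L i)
            * ((n : ℝ)⁻¹ * ∑ i, f i x - (n : ℝ)⁻¹ * ∑ i, f i xs) :=
  subsampling_er_without_replacement_general hn b hb1 hbn X f hdiff L hL hsmooth hstat
end

section
/- Let F = (1/n)(f_1 + … + f_n) with each f_i convex and L_i-smooth on X ⊆ ℝ^d (‖∇f_i(x) − ∇f_i(y)‖₂² ≤ 2L_i D_{f_i}(x,y)), let B ⊆ {1,…,n} be any fixed index set of size b, and let g_1, …, g_n be unbiased estimators of ∇f_1, …, ∇f_n each satisfying tr 𝕍[g_i(x) − g_i(y)] ≤ 2𝓛_i D_{f_i}(x, y) for all x, y ∈ X. Then for g_B(x) = (1/b)Σ_{i∈B} g_i(x) and any minimizer x* of F over X, E‖g_B(x) − g_B(x*)‖₂² ≤ 2(𝓛_max + L_max) D_{f_B}(x, x*) for all x ∈ X, where f_B = (1/b)Σ_{i∈B} f_i, 𝓛_max = max{𝓛_1,…,𝓛_n}, and L_max = max{L_1,…,L_n}.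 -/
open MeasureTheory ProbabilityTheory
open scoped ENNReal

/-! The batch difference `g_B(x) − g_B(x*)` is the average over `B` of `vᵢ = gᵢ(x) − gᵢ(x*)`, and
`E‖·‖² = tr 𝕍 + ‖E ·‖²`. By Jensen for `‖·‖²`, the variance term is at most the average of the
`tr 𝕍[vᵢ] ≤ 2𝓛ᵢ D_{fᵢ}(x, x*)` and the mean term, `‖(1/b) Σ (∇fᵢ(x) − ∇fᵢ(x*))‖²`, at most the
average of the `2Lᵢ D_{fᵢ}(x, x*)`. Convexity makes every `D_{fᵢ}(x, x*)` nonnegative, so the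
constants can be replaced by their maxima, and `D_{f_B}` is the average of the `D_{fᵢ}`. -/

open Finset

theorem norm_inv_card_smul_sum_sq_le {E ι : Type*} [SeminormedAddCommGroup E] [NormedSpace ℝ E]
    (s : Finset ι) (u : ι → E) :
    ‖(#s : ℝ)⁻¹ • ∑ i ∈ s, u i‖ ^ 2 ≤ (#s : ℝ)⁻¹ * ∑ i ∈ s, ‖u i‖ ^ 2 := by
  calc ‖(#s : ℝ)⁻¹ • ∑ i ∈ s, u i‖ ^ 2 = (#s : ℝ)⁻¹ ^ 2 * ‖∑ i ∈ s, u i‖ ^ 2 := by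
        rw [norm_smul, mul_pow, Real.norm_eq_abs, sq_abs]
    _ ≤ (#s : ℝ)⁻¹ ^ 2 * (#s * ∑ i ∈ s, ‖u i‖ ^ 2) := by
        gcongr
        exact (pow_le_pow_left₀ (norm_nonneg _) (norm_sum_le s u) 2).trans
          (sq_sum_le_card_mul_sum_sq ..)
    _ = (#s : ℝ)⁻¹ * ∑ i ∈ s, ‖u i‖ ^ 2 := by
        rcases s.eq_empty_or_nonempty with rfl | hs
        · simp
        · have : (#s : ℝ) ≠ 0 := by exact_mod_cast hs.card_pos.ne'
          field_simp

theorem inv_card_mul_sum_le_of_le_mul {ι : Type*} (s : Finset ι) {a D : ι → ℝ} {K : ℝ}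
    (h : ∀ i ∈ s, a i ≤ K * D i) :
    (#s : ℝ)⁻¹ * ∑ i ∈ s, a i ≤ K * ((#s : ℝ)⁻¹ * ∑ i ∈ s, D i) := by
  calc (#s : ℝ)⁻¹ * ∑ i ∈ s, a i ≤ (#s : ℝ)⁻¹ * ∑ i ∈ s, K * D i := by
        gcongr with i hi
        exact h i hi
    _ = K * ((#s : ℝ)⁻¹ * ∑ i ∈ s, D i) := by rw [← Finset.mul_sum]; ring

section Variance

variable {Ω E : Type*} [MeasurableSpace Ω] {μ : Measure Ω}
  [NormedAddCommGroup E] [InnerProductSpace ℝ E] [CompleteSpace E]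

theorem integral_norm_sq_eq_trVar_add_norm_integral_sq [IsProbabilityMeasure μ] {w : Ω → E}
    (hw : MemLp w 2 μ) :
    ∫ ω, ‖w ω‖ ^ 2 ∂μ = trVar μ w + ‖∫ ω, w ω ∂μ‖ ^ 2 := by
  set m := ∫ ω, w ω ∂μ
  have hint : Integrable w μ := hw.integrable one_le_two
  have hsq : Integrable (fun ω => ‖w ω‖ ^ 2) μ := hw.norm.integrable_sq
  have hinner : Integrable (fun ω => 2 * inner ℝ m (w ω)) μ :=
    ((innerSL ℝ m).integrable_comp hint).const_mul 2
  have hcross : ∫ ω, 2 * inner ℝ m (w ω) ∂μ = 2 * ‖m‖ ^ 2 := by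
    rw [integral_const_mul, integral_inner hint, real_inner_self_eq_norm_sq]
  have hvar : trVar μ w = ∫ ω, (‖w ω‖ ^ 2 - 2 * inner ℝ m (w ω) + ‖m‖ ^ 2) ∂μ := by
    unfold trVar
    congr with ω
    rw [norm_sub_sq_real, real_inner_comm]
  rw [hvar, integral_add (by exact hsq.sub hinner) (integrable_const _),
    integral_sub hsq hinner, hcross, integral_const, probReal_univ, one_smul]
  ring

theorem trVar_inv_card_smul_sum_le [IsFiniteMeasure μ] {ι : Type*} (s : Finset ι)
    {v : ι → Ω → E} (hv : ∀ i ∈ s, MemLp (v i) 2 μ) :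
    trVar μ (fun ω => (#s : ℝ)⁻¹ • ∑ i ∈ s, v i ω) ≤ (#s : ℝ)⁻¹ * ∑ i ∈ s, trVar μ (v i) := by
  have hint : ∀ i ∈ s, Integrable (v i) μ := fun i hi => (hv i hi).integrable one_le_two
  have hsq : ∀ i ∈ s, Integrable (fun ω => ‖v i ω - ∫ ω', v i ω' ∂μ‖ ^ 2) μ := fun i hi =>
    ((hv i hi).sub (memLp_const _)).norm.integrable_sq
  have hmean : ∫ ω, (#s : ℝ)⁻¹ • ∑ i ∈ s, v i ω ∂μ = (#s : ℝ)⁻¹ • ∑ i ∈ s, ∫ ω, v i ω ∂μ := by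
    rw [integral_smul, integral_finsetSum s hint]
  calc trVar μ (fun ω => (#s : ℝ)⁻¹ • ∑ i ∈ s, v i ω)
      = ∫ ω, ‖(#s : ℝ)⁻¹ • ∑ i ∈ s, (v i ω - ∫ ω', v i ω' ∂μ)‖ ^ 2 ∂μ := by
        simp only [trVar, hmean, sum_sub_distrib, smul_sub]
    _ ≤ ∫ ω, (#s : ℝ)⁻¹ * ∑ i ∈ s, ‖v i ω - ∫ ω', v i ω' ∂μ‖ ^ 2 ∂μ :=
        integral_mono_of_nonneg (.of_forall fun _ => by positivity)
          ((integrable_finsetSum s hsq).const_mul _)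
          (.of_forall fun ω => norm_inv_card_smul_sum_sq_le s _)
    _ = (#s : ℝ)⁻¹ * ∑ i ∈ s, trVar μ (v i) := by
        rw [integral_const_mul, integral_finsetSum s hsq]
        rfl

end Variance

theorem ConvexOn.fderiv_sub_le_sub {E : Type*} [NormedAddCommGroup E] [NormedSpace ℝ E]
    {s : Set E} {f : E → ℝ} (hf : ConvexOn ℝ s f) {x y : E} (hx : x ∈ s) (hy : y ∈ s)
    (hdf : DifferentiableAt ℝ f y) :
    fderiv ℝ f y (x - y) ≤ f x - f y := by
  set c := AffineMap.lineMap (k := ℝ) y x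
  have hc : HasDerivAt (f ∘ c) (fderiv ℝ f y (x - y)) 0 := by
    have hf' : HasFDerivAt f (fderiv ℝ f y) (c 0) := by
      simpa [c] using hdf.hasFDerivAt
    exact hf'.comp_hasDerivAt 0 AffineMap.hasDerivAt_lineMap
  simpa [c, slope_def_field] using
    (hf.comp_affineMap c).le_slope_of_hasDerivAt (x := 0) (y := 1) (by simpa [c]) (by simpa [c])
      one_pos hc

section Bregman

variable {E : Type*} [NormedAddCommGroup E] [InnerProductSpace ℝ E] [CompleteSpace E]

theorem breg_eq_fderiv (φ : E → ℝ) (x y : E) :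
    breg φ x y = φ x - φ y - fderiv ℝ φ y (x - y) := by
  rw [breg, inner_gradient_left]

theorem breg_nonneg {s : Set E} {φ : E → ℝ} (hφ : ConvexOn ℝ s φ) {x y : E} (hx : x ∈ s)
    (hy : y ∈ s) (hdφ : DifferentiableAt ℝ φ y) : 0 ≤ breg φ x y := by
  rw [breg_eq_fderiv]
  linarith [hφ.fderiv_sub_le_sub hx hy hdφ]

theorem breg_const_mul_sum {ι : Type*} (s : Finset ι) {f : ι → E → ℝ} {x y : E}
    (hf : ∀ i ∈ s, DifferentiableAt ℝ (f i) y) (c : ℝ) :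
    breg (fun z => c * ∑ i ∈ s, f i z) x y = c * ∑ i ∈ s, breg (f i) x y := by
  simp only [breg_eq_fderiv, fderiv_const_mul (DifferentiableAt.fun_sum hf), fderiv_fun_sum hf,
    smul_apply, FunLike.coe_sum, Finset.sum_apply, smul_eq_mul, sum_sub_distrib]
  ring

end Bregman

theorem fixed_batch_expected_smoothness_general
    {d n : ℕ}
    {Ω : Type*} [MeasurableSpace Ω] (μ : Measure Ω) [IsProbabilityMeasure μ]
    (X : Set (EuclideanSpace ℝ (Fin d)))
    (f : Fin n → EuclideanSpace ℝ (Fin d) → ℝ)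
    (hconv : ∀ i, ConvexOn ℝ X (f i)) (hdiff : ∀ i, Differentiable ℝ (f i))
    (L : Fin n → ℝ)
    (hsmooth : ∀ i, ∀ x ∈ X, ∀ y ∈ X,
      ‖gradient (f i) x - gradient (f i) y‖ ^ 2 ≤ 2 * L i * breg (f i) x y)
    (g : Fin n → EuclideanSpace ℝ (Fin d) → Ω → EuclideanSpace ℝ (Fin d))
    (hmem : ∀ i, ∀ x ∈ X, MemLp (g i x) 2 μ)
    (hunbiased : ∀ i, ∀ x ∈ X, ∫ ω, g i x ω ∂μ = gradient (f i) x)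
    (𝓛 : Fin n → ℝ)
    (hAcvx : ∀ i, ∀ x ∈ X, ∀ y ∈ X,
      trVar μ (fun ω => g i x ω - g i y ω) ≤ 2 * 𝓛 i * breg (f i) x y)
    -- a fixed (deterministic) index set of size `b`
    (b : ℕ) (B : Finset (Fin n)) (hcard : B.card = b) :
    ∀ x ∈ X, ∀ xs ∈ X,
      (∀ y ∈ X, (n : ℝ)⁻¹ * ∑ i, f i xs ≤ (n : ℝ)⁻¹ * ∑ i, f i y) →
      ∫ ω, ‖(b : ℝ)⁻¹ • ∑ i ∈ B, g i x ω - (b : ℝ)⁻¹ • ∑ i ∈ B, g i xs ω‖ ^ 2 ∂μ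
        ≤ 2 * ((⨆ i, 𝓛 i) + (⨆ i, L i))
            * breg (fun z => (b : ℝ)⁻¹ * ∑ i ∈ B, f i z) x xs := by
  intro x hx xs hxs _
  subst hcard
  set v := fun i ω => g i x ω - g i xs ω
  have hv : ∀ i ∈ B, MemLp (v i) 2 μ := fun i _ => (hmem i x hx).sub (hmem i xs hxs)
  have hmean : ∫ ω, (#B : ℝ)⁻¹ • ∑ i ∈ B, v i ω ∂μ
      = (#B : ℝ)⁻¹ • ∑ i ∈ B, (gradient (f i) x - gradient (f i) xs) := by
    rw [integral_smul, integral_finsetSum B fun i hi => (hv i hi).integrable one_le_two]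
    simp only [v, integral_sub ((hmem _ x hx).integrable one_le_two)
      ((hmem _ xs hxs).integrable one_le_two), hunbiased _ x hx, hunbiased _ xs hxs]
  have hmax : ∀ (K : Fin n → ℝ) i, 2 * K i * breg (f i) x xs ≤ 2 * (⨆ j, K j) * breg (f i) x xs :=
    fun K i => by
      gcongr
      · exact breg_nonneg (hconv i) hx hxs (hdiff i xs)
      · exact le_ciSup (Set.finite_range K).bddAbove i
  rw [breg_const_mul_sum B fun i _ => hdiff i xs]
  calc ∫ ω, ‖(#B : ℝ)⁻¹ • ∑ i ∈ B, g i x ω - (#B : ℝ)⁻¹ • ∑ i ∈ B, g i xs ω‖ ^ 2 ∂μ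
      = ∫ ω, ‖(#B : ℝ)⁻¹ • ∑ i ∈ B, v i ω‖ ^ 2 ∂μ := by simp only [v, smul_sub, sum_sub_distrib]
    _ = trVar μ (fun ω => (#B : ℝ)⁻¹ • ∑ i ∈ B, v i ω)
          + ‖(#B : ℝ)⁻¹ • ∑ i ∈ B, (gradient (f i) x - gradient (f i) xs)‖ ^ 2 := by
        rw [integral_norm_sq_eq_trVar_add_norm_integral_sq
          (by exact (memLp_finsetSum B hv).const_smul (#B : ℝ)⁻¹), hmean]
    _ ≤ (#B : ℝ)⁻¹ * ∑ i ∈ B, trVar μ (v i)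
          + (#B : ℝ)⁻¹ * ∑ i ∈ B, ‖gradient (f i) x - gradient (f i) xs‖ ^ 2 :=
        add_le_add (trVar_inv_card_smul_sum_le B hv) (norm_inv_card_smul_sum_sq_le B _)
    _ ≤ 2 * (⨆ i, 𝓛 i) * ((#B : ℝ)⁻¹ * ∑ i ∈ B, breg (f i) x xs)
          + 2 * (⨆ i, L i) * ((#B : ℝ)⁻¹ * ∑ i ∈ B, breg (f i) x xs) :=
        add_le_add
          (inv_card_mul_sum_le_of_le_mul B fun i _ => (hAcvx i x hx xs hxs).trans (hmax 𝓛 i))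
          (inv_card_mul_sum_le_of_le_mul B fun i _ => (hsmooth i x hx xs hxs).trans (hmax L i))
    _ = _ := by ring

/-- Expected smoothness of the minibatch estimator for a fixed batch `B`:
if each component `fᵢ` is convex and `Lᵢ`-smooth and each estimator `gᵢ` satisfies the convex
expected-residual condition with constant `𝓛ᵢ`, then
`E‖g_B(x) − g_B(x*)‖² ≤ 2(𝓛_max + L_max) D_{f_B}(x, x*)`. -/
theorem fixed_batch_expected_smoothness
    {d n : ℕ} (hn : 0 < n)
    {Ω : Type*} [MeasurableSpace Ω] (μ : Measure Ω) [IsProbabilityMeasure μ]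
    (X : Set (EuclideanSpace ℝ (Fin d)))
    (f : Fin n → EuclideanSpace ℝ (Fin d) → ℝ)
    (hconv : ∀ i, ConvexOn ℝ X (f i)) (hdiff : ∀ i, Differentiable ℝ (f i))
    (L : Fin n → ℝ) (hL : ∀ i, 0 < L i)
    (hsmooth : ∀ i, ∀ x ∈ X, ∀ y ∈ X,
      ‖gradient (f i) x - gradient (f i) y‖ ^ 2 ≤ 2 * L i * breg (f i) x y)
    (g : Fin n → EuclideanSpace ℝ (Fin d) → Ω → EuclideanSpace ℝ (Fin d))
    (hmem : ∀ i, ∀ x ∈ X, MemLp (g i x) 2 μ)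
    (hunbiased : ∀ i, ∀ x ∈ X, ∫ ω, g i x ω ∂μ = gradient (f i) x)
    (𝓛 : Fin n → ℝ) (h𝓛 : ∀ i, 0 < 𝓛 i)
    (hAcvx : ∀ i, ∀ x ∈ X, ∀ y ∈ X,
      trVar μ (fun ω => g i x ω - g i y ω) ≤ 2 * 𝓛 i * breg (f i) x y)
    -- a fixed (deterministic) index set of size `b`
    (b : ℕ) (hb : 0 < b) (B : Finset (Fin n)) (hcard : B.card = b) :
    ∀ x ∈ X, ∀ xs ∈ X,
      (∀ y ∈ X, (n : ℝ)⁻¹ * ∑ i, f i xs ≤ (n : ℝ)⁻¹ * ∑ i, f i y) →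
      ∫ ω, ‖(b : ℝ)⁻¹ • ∑ i ∈ B, g i x ω - (b : ℝ)⁻¹ • ∑ i ∈ B, g i xs ω‖ ^ 2 ∂μ
        ≤ 2 * ((⨆ i, 𝓛 i) + (⨆ i, L i))
            * breg (fun z => (b : ℝ)⁻¹ * ∑ i ∈ B, f i z) x xs :=
  fixed_batch_expected_smoothness_general μ X f hconv hdiff L hsmooth g hmem hunbiased 𝓛 hAcvx b B
    hcard
end
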